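/- Let (X̂, ℬ̂, T̂, ℚ) be a measure-preserving probability system and F : X̂ → ℝ measurable with ℚ(limₙ ŜₙF/n = 0) = 1. Let G = limₙ max_{1 ≤ k ≤ n} Ŝ_k F ∈ (−∞, ∞]. Then ℚ-a.s. G ≥ 0, and hence G⁺ = F + G⁺∘T̂ ℚ-a.e. on {G⁺∘T̂ < ∞}. -/

import Mathlib

/-!
Fix `δ > 0` and let `A` be the set of points all of whose Birkhoff sums `S_k`, `k ≥ 1`, are
`≤ -δ`. Cutting an orbit segment starting in `A` at its returns to `A` gives
`S_n ≤ -δ · #{k < n | T^k x ∈ A}`, so if `S_n / n → 0` at a point of `A`, the orbit visits `A`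
with frequency zero. The set `B` of points visiting `A` with frequency zero is invariant, so
`T` preserves `Q` restricted to `B`; hence the Birkhoff averages of `1_A` have integral `Q(A ∩ B)`
over `B` for every `n`, while they tend to `0` on `B`. By dominated convergence `Q(A ∩ B) = 0`.
Thus a.s. some `S_k`, `k ≥ 1`, exceeds `-δ` for every `δ`, i.e. `G ≥ 0`. The identity
`G = F + max(G ∘ T, 0)` holds pointwise, from `S_{k+1} = F + S_k ∘ T`.
-/

open MeasureTheory Filter Finset Function Set Topology

theorem EReal.coe_add_iSup {ι : Sort*} (c : ℝ) (u : ι → EReal) :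
    (c : EReal) + ⨆ i, u i = ⨆ i, ((c : EReal) + u i) :=
  Monotone.map_iSup_of_continuousAt (f := fun y => (c : EReal) + y)
    ((EReal.continuousAt_add (Or.inl (EReal.coe_ne_top c)) (Or.inl (EReal.coe_ne_bot c))).comp
      (continuousAt_const.prodMk continuousAt_id))
    (fun _ _ h => add_le_add le_rfl h) (EReal.add_bot _)

section Birkhoff

variable {α : Type*} {T : α → α}

theorem norm_birkhoffAverage_le {E : Type*} [SeminormedAddCommGroup E] [NormedSpace ℝ E]
    {g : α → E} {C : ℝ} (hg : ∀ y, ‖g y‖ ≤ C) (n : ℕ) (x : α) :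
    ‖birkhoffAverage ℝ T g n x‖ ≤ C := by
  rcases n.eq_zero_or_pos with rfl | hn
  · simpa using (norm_nonneg _).trans (hg x)
  calc ‖birkhoffAverage ℝ T g n x‖ ≤ (n : ℝ)⁻¹ * ∑ k ∈ range n, ‖g (T^[k] x)‖ := by
        rw [birkhoffAverage, norm_smul, Real.norm_of_nonneg (by positivity)]
        gcongr
        exact norm_sum_le _ _
    _ ≤ (n : ℝ)⁻¹ * (n * C) := by
        gcongr
        simpa using sum_le_sum fun k (_ : k ∈ range n) => hg (T^[k] x)
    _ = C := by field_simp

theorem preimage_setOf_tendsto_birkhoffAverage {E : Type*} [NormedAddCommGroup E]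
    [NormedSpace ℝ E] {g : α → E} (hg : Bornology.IsBounded (range g)) (l : E) :
    T ⁻¹' {x | Tendsto (birkhoffAverage ℝ T g · x) atTop (𝓝 l)} =
      {x | Tendsto (birkhoffAverage ℝ T g · x) atTop (𝓝 l)} := by
  ext x
  have hdiff := tendsto_birkhoffAverage_apply_sub_birkhoffAverage' ℝ hg T x
  constructor
  · intro hTx
    simpa using hTx.sub hdiff
  · intro hx
    simpa using hdiff.add hx

theorem birkhoffSum_le_neg_mul_birkhoffSum_indicator {F : α → ℝ} {A : Set α} {δ : ℝ}
    (hA : ∀ y ∈ A, ∀ k, 0 < k → birkhoffSum T F k y ≤ -δ) {x : α} (hx : x ∈ A) (n : ℕ) :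
    birkhoffSum T F n x ≤ -δ * birkhoffSum T (A.indicator 1) n x := by
  induction n using Nat.strong_induction_on generalizing x with
  | _ n ih =>
  by_cases hret : ∃ j, 0 < j ∧ j < n ∧ T^[j] x ∈ A
  · obtain ⟨j, hj0, hjn, hjA⟩ := hret
    obtain ⟨m, rfl⟩ := Nat.exists_eq_add_of_le hjn.le
    rw [birkhoffSum_add, birkhoffSum_add, mul_add]
    exact add_le_add (ih j hjn hx) (ih m (by omega) hjA)
  · push Not at hret
    rcases n with _ | m
    · simp
    have hvisits : birkhoffSum T (A.indicator 1) (m + 1) x = (1 : ℝ) := by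
      rw [birkhoffSum_succ', birkhoffSum, sum_eq_zero fun i hi => ?_]
      · simp [hx]
      · rw [← iterate_succ_apply]
        exact indicator_of_notMem (hret (i + 1) i.succ_pos (by simpa using hi)) _
    rw [hvisits, mul_one]
    exact hA x hx (m + 1) m.succ_pos

theorem iSup_birkhoffSum_eq_add_sup_zero (T : α → α) (F : α → ℝ) (x : α) :
    ⨆ k : ℕ, ⨆ _ : 1 ≤ k, ((birkhoffSum T F k x : ℝ) : EReal) =
      F x + ((⨆ k : ℕ, ⨆ _ : 1 ≤ k, ((birkhoffSum T F k (T x) : ℝ) : EReal)) ⊔ 0) := by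
  have hshift : ∀ y, ⨆ k : ℕ, ⨆ _ : 1 ≤ k, ((birkhoffSum T F k y : ℝ) : EReal) =
      ⨆ k, ((birkhoffSum T F (k + 1) y : ℝ) : EReal) :=
    fun y => iSup_ge_eq_iSup_nat_add (fun k => ((birkhoffSum T F k y : ℝ) : EReal)) 1
  have hzero : (⨆ k, ((birkhoffSum T F (k + 1) (T x) : ℝ) : EReal)) ⊔ 0 =
      ⨆ k, ((birkhoffSum T F k (T x) : ℝ) : EReal) := by
    simpa [sup_comm] using sup_iSup_nat_succ fun k => ((birkhoffSum T F k (T x) : ℝ) : EReal)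
  rw [hshift, hshift, hzero]
  simp only [birkhoffSum_succ', EReal.coe_add, EReal.coe_add_iSup]

variable [MeasurableSpace α]

theorem measurable_birkhoffSum (hT : Measurable T) {g : α → ℝ} (hg : Measurable g)
    (n : ℕ) : Measurable (birkhoffSum T g n) :=
  Finset.measurable_fun_sum (range n) fun k _ => hg.comp (hT.iterate k)

theorem measurable_birkhoffAverage (hT : Measurable T) {g : α → ℝ} (hg : Measurable g)
    (n : ℕ) : Measurable (birkhoffAverage ℝ T g n) :=
  (measurable_birkhoffSum hT hg n).const_smul (n : ℝ)⁻¹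

variable {μ : Measure α}

theorem MeasureTheory.MeasurePreserving.integral_birkhoffAverage (hT : MeasurePreserving T μ μ)
    {g : α → ℝ} (hg : Integrable g μ) {n : ℕ} (hn : n ≠ 0) :
    ∫ x, birkhoffAverage ℝ T g n x ∂μ = ∫ x, g x ∂μ := by
  have hcomp : ∀ k, ∫ x, g (T^[k] x) ∂μ = ∫ x, g x ∂μ := fun k => by
    have h := integral_map (hT.iterate k).aemeasurable
      (((hT.iterate k).map_eq).symm ▸ hg.aestronglyMeasurable)
    rwa [(hT.iterate k).map_eq, eq_comm] at h
  simp only [birkhoffAverage, birkhoffSum, smul_eq_mul]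
  rw [integral_const_mul, integral_finsetSum (f := fun k x => g (T^[k] x)) _ fun k _ =>
    (hT.iterate k).integrable_comp_of_integrable hg]
  simp [hcomp, hn]

theorem MeasureTheory.MeasurePreserving.setIntegral_setOf_tendsto_birkhoffAverage_zero
    [IsFiniteMeasure μ] (hT : MeasurePreserving T μ μ) {g : α → ℝ} (hg : Measurable g)
    (hgb : Bornology.IsBounded (range g)) :
    ∫ x in {x | Tendsto (birkhoffAverage ℝ T g · x) atTop (𝓝 0)}, g x ∂μ = 0 := by
  set B := {x | Tendsto (birkhoffAverage ℝ T g · x) atTop (𝓝 0)}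
  obtain ⟨C, hC⟩ := isBounded_iff_forall_norm_le.1 hgb
  have hgC : ∀ y, ‖g y‖ ≤ C := fun y => hC _ (mem_range_self y)
  have hB : MeasurableSet B :=
    measurableSet_tendsto _ (measurable_birkhoffAverage hT.measurable hg)
  have hTB : MeasurePreserving T (μ.restrict B) (μ.restrict B) := by
    have h := hT.restrict_preimage hB
    rwa [show T ⁻¹' B = B from preimage_setOf_tendsto_birkhoffAverage hgb 0] at h
  have hint : Integrable g (μ.restrict B) := .of_bound hg.aestronglyMeasurable C (.of_forall hgC)
  have hlim : Tendsto (fun n => ∫ x in B, birkhoffAverage ℝ T g n x ∂μ) atTop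
      (𝓝 (∫ x in B, (0 : ℝ) ∂μ)) :=
    tendsto_integral_of_dominated_convergence (fun _ => C)
      (fun n => (measurable_birkhoffAverage hT.measurable hg n).aestronglyMeasurable)
      (integrable_const C) (fun n => .of_forall (norm_birkhoffAverage_le hgC n))
      ((ae_restrict_mem hB).mono fun x hx => hx)
  have hconst : ∀ᶠ n in atTop, ∫ x in B, birkhoffAverage ℝ T g n x ∂μ = ∫ x in B, g x ∂μ :=
    (eventually_ne_atTop 0).mono fun n hn => hTB.integral_birkhoffAverage hint hn
  simpa using tendsto_nhds_unique (tendsto_const_nhds.congr' (hconst.mono fun _ h => h.symm)) hlim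

theorem MeasureTheory.MeasurePreserving.measure_inter_setOf_tendsto_birkhoffAverage_indicator
    [IsFiniteMeasure μ] (hT : MeasurePreserving T μ μ) {A : Set α} (hA : MeasurableSet A) :
    μ (A ∩ {x | Tendsto (birkhoffAverage ℝ T (A.indicator (1 : α → ℝ)) · x) atTop (𝓝 0)}) = 0 := by
  have hbdd : Bornology.IsBounded (range (A.indicator (1 : α → ℝ))) :=
    isBounded_iff_forall_norm_le.2 ⟨1, forall_mem_range.2 fun x =>
      (norm_indicator_le_norm_self _ x).trans (by simp)⟩
  have h := hT.setIntegral_setOf_tendsto_birkhoffAverage_zero (measurable_one.indicator hA) hbdd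
  rwa [integral_indicator_one hA, measureReal_restrict_apply hA, measureReal_eq_zero_iff] at h

theorem MeasureTheory.MeasurePreserving.ae_exists_birkhoffSum_gt [IsFiniteMeasure μ]
    (hT : MeasurePreserving T μ μ) {F : α → ℝ} (hF : Measurable F) {δ : ℝ} (hδ : 0 < δ) :
    ∀ᵐ x ∂μ, Tendsto (birkhoffAverage ℝ T F · x) atTop (𝓝 0) →
      ∃ k, 0 < k ∧ -δ < birkhoffSum T F k x := by
  set A := {y | ∀ k, 0 < k → birkhoffSum T F k y ≤ -δ}
  have hA : MeasurableSet A := by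
    simp only [A, ofPred_forall]
    exact .iInter fun k => .iInter fun _ =>
      measurableSet_le (measurable_birkhoffSum hT.measurable hF k) measurable_const
  refine measure_mono_null (fun x hx => ?_)
    (hT.measure_inter_setOf_tendsto_birkhoffAverage_indicator hA)
  simp only [mem_compl_iff, mem_ofPred_eq, Classical.not_imp, not_exists, not_and, not_lt] at hx
  obtain ⟨hlim, hxA⟩ := hx
  refine ⟨hxA, squeeze_zero (fun n => ?_) (fun n => ?_) (by simpa using hlim.neg.div_const δ)⟩
  · exact smul_nonneg (by positivity) (sum_nonneg fun _ _ => indicator_nonneg (by simp) _)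
  · have h := mul_le_mul_of_nonneg_left
      (birkhoffSum_le_neg_mul_birkhoffSum_indicator (A := A) (fun _ hy => hy) hxA n)
      (inv_nonneg.2 (n.cast_nonneg (α := ℝ)))
    simp only [birkhoffAverage, smul_eq_mul]
    rw [le_div_iff₀ hδ]
    linarith

theorem MeasureTheory.MeasurePreserving.ae_zero_le_iSup_birkhoffSum [IsFiniteMeasure μ]
    (hT : MeasurePreserving T μ μ) {F : α → ℝ} (hF : Measurable F)
    (hlim : ∀ᵐ x ∂μ, Tendsto (birkhoffAverage ℝ T F · x) atTop (𝓝 0)) :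
    ∀ᵐ x ∂μ, 0 ≤ ⨆ k : ℕ, ⨆ _ : 1 ≤ k, ((birkhoffSum T F k x : ℝ) : EReal) := by
  have hexists := fun m : ℕ => hT.ae_exists_birkhoffSum_gt hF (Nat.one_div_pos_of_nat (n := m))
  have hδ : Tendsto (fun m : ℕ => ((-(1 / ((m : ℝ) + 1)) : ℝ) : EReal)) atTop (𝓝 0) := by
    simpa using EReal.tendsto_coe.2 tendsto_one_div_add_atTop_nhds_zero_nat.neg
  filter_upwards [hlim, ae_all_iff.2 hexists] with x hx hgt
  refine le_of_tendsto' hδ fun m => ?_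
  obtain ⟨k, hk, hlt⟩ := hgt m hx
  exact (EReal.coe_le_coe_iff.2 hlt.le).trans (le_iSup₂_of_le k hk le_rfl)

end Birkhoff

/-- If the Birkhoff averages of `F` tend to `0` a.e., then the limit
`G = limₙ max_{1 ≤ k ≤ n} Ŝ_k F` satisfies `G ≥ 0` a.e., and hence the filling-scheme
identity simplifies to `G⁺ = F + G⁺∘T̂` a.e. on `{G⁺∘T̂ < ∞}`. -/
theorem filling_scheme_nonneg
    {X : Type*} [MeasurableSpace X] (Q : Measure X) [IsProbabilityMeasure Q]
    (T : X → X) (hT : MeasurePreserving T Q Q)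
    (F : X → ℝ) (hF : Measurable F)
    (hlim : ∀ᵐ x ∂Q, Tendsto
      (fun n => (∑ k ∈ Finset.range n, F (T^[k] x)) / (n : ℝ)) atTop (nhds 0))
    (G : X → EReal)
    (hG : ∀ x, G x = ⨆ k : ℕ, ⨆ _ : 1 ≤ k,
      ((∑ i ∈ Finset.range k, F (T^[i] x) : ℝ) : EReal)) :
    ∀ᵐ x ∂Q, 0 ≤ G x ∧
      (G (T x) ⊔ 0 < ⊤ → G x ⊔ 0 = (F x : EReal) + (G (T x) ⊔ 0)) := by
  obtain rfl : G = fun x => ⨆ k : ℕ, ⨆ _ : 1 ≤ k, ((birkhoffSum T F k x : ℝ) : EReal) :=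
    funext hG
  have hlim' : ∀ᵐ x ∂Q, Tendsto (birkhoffAverage ℝ T F · x) atTop (𝓝 0) :=
    hlim.mono fun x hx => by simpa [birkhoffAverage, birkhoffSum, div_eq_inv_mul] using hx
  filter_upwards [hT.ae_zero_le_iSup_birkhoffSum hF hlim'] with x hx
  refine ⟨hx, fun _ => ?_⟩
  rw [sup_of_le_left hx]
  exact iSup_birkhoffSum_eq_add_sup_zero T F x
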